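/- Let A be a real n×n matrix, B a real n×m matrix, Q a symmetric n×n matrix, R a symmetric positive definite m×m matrix, and let P, P̃ be symmetric positive semidefinite n×n matrices. Let P⁺ := Q + AᵀPA − AᵀPB(R + BᵀPB)⁻¹BᵀPA be the Riccati update of P with gain K := (R + BᵀPB)⁻¹BᵀPA, let K̃° := (R + BᵀP̃B)⁻¹BᵀP̃A be the Riccati gain of P̃, and for an arbitrary m×n matrix δ let P̃⁺ := (A − B(K̃°+δ))ᵀP̃(A − B(K̃°+δ)) + (K̃°+δ)ᵀR(K̃°+δ) + Q be the Lyapunov update of P̃ at the perturbed gain K̃° + δ. Then ‖P⁺ − P̃⁺‖ ≤ ‖A‖ · ‖A − BK‖ · ‖(I + P̃BR⁻¹Bᵀ)⁻¹‖ · ‖P − P̃‖ + ‖δ‖² · ‖R + BᵀP̃B‖. -/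

import Mathlib

open Matrix Finset

/-- Spectral norm of a real matrix: the operator norm with respect to the
Euclidean norms on the domain and codomain. -/
noncomputable def specNorm {p q : ℕ} (M : Matrix (Fin p) (Fin q) ℝ) : ℝ :=
  ‖LinearMap.toContinuousLinearMap (Matrix.toEuclideanLin M)‖

/-- Spectral radius of a real square matrix: the largest modulus of a
(complex) eigenvalue. -/
noncomputable def specRad {p : ℕ} (M : Matrix (Fin p) (Fin p) ℝ) : ℝ :=
  sSup {r : ℝ | ∃ μ ∈ spectrum ℂ (M.map (algebraMap ℝ ℂ)), r = ‖μ‖}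

/-- Smallest (real) eigenvalue of a square matrix. -/
noncomputable def lambdaMin {p : ℕ} (S : Matrix (Fin p) (Fin p) ℝ) : ℝ :=
  sInf {r : ℝ | ∃ v : Fin p → ℝ, v ≠ 0 ∧ S.mulVec v = r • v}

/-- `W`-induced norm of `M`: `sup_{z ≠ 0} √((zᵀMᵀWMz)/(zᵀWz))`. -/
noncomputable def winducedNorm {p : ℕ} (W M : Matrix (Fin p) (Fin p) ℝ) : ℝ :=
  sSup {r : ℝ | ∃ z : Fin p → ℝ, z ≠ 0 ∧
    r = Real.sqrt ((z ⬝ᵥ (Mᵀ * W * M).mulVec z) / (z ⬝ᵥ W.mulVec z))}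

/-- `W`-relative bound of a symmetric matrix `X`: `sup_{z ≠ 0} (zᵀXz)/(zᵀWz)`. -/
noncomputable def wrelBound {p : ℕ} (W X : Matrix (Fin p) (Fin p) ℝ) : ℝ :=
  sSup {r : ℝ | ∃ z : Fin p → ℝ, z ≠ 0 ∧
    r = (z ⬝ᵥ X.mulVec z) / (z ⬝ᵥ W.mulVec z)}

/-- Frobenius norm of a real matrix. -/
noncomputable def frobNorm {p q : ℕ} (M : Matrix (Fin p) (Fin q) ℝ) : ℝ :=
  Real.sqrt (∑ i, ∑ j, (M i j) ^ 2)

/-! Call `K` a Riccati gain for `P` when `Bᵀ P (A - B K) = R K`, i.e. `(R + BᵀPB) K = BᵀPA`.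
Completing the square, the Lyapunov update of `P̃` at `K̃ + δ` exceeds
the one at `K̃` by `δᵀ (R + BᵀP̃B) δ`; the Riccati update of `P` is its Lyapunov update at `K`; and
for Riccati gains the two Lyapunov updates differ by `(A - BK)ᵀ (P - P̃) (A - BK̃)`. Since
`(I + BR⁻¹BᵀP̃)(A - BK̃) = A`, the closed loop is `A - BK̃ = (I + P̃BR⁻¹Bᵀ)⁻ᵀ A`, and the bound
follows from submultiplicativity of the spectral norm and `‖Mᵀ‖ = ‖M‖`. -/

section Riccati

variable {ι κ α : Type*} [Fintype ι] [Fintype κ] [CommRing α]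
  (A : Matrix ι ι α) (B : Matrix ι κ α) (Q : Matrix ι ι α) (R : Matrix κ κ α) (P : Matrix ι ι α)

noncomputable def riccatiGain [DecidableEq κ] : Matrix κ ι α := (R + Bᵀ * P * B)⁻¹ * (Bᵀ * P * A)

noncomputable def riccatiUpdate [DecidableEq κ] : Matrix ι ι α :=
  Q + Aᵀ * P * A - Aᵀ * P * B * (R + Bᵀ * P * B)⁻¹ * (Bᵀ * P * A)

def lyapunovUpdate (K : Matrix κ ι α) : Matrix ι ι α :=
  (A - B * K)ᵀ * P * (A - B * K) + Kᵀ * R * K + Q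

def IsRiccatiGain (K : Matrix κ ι α) : Prop := Bᵀ * P * (A - B * K) = R * K

variable {A B Q R P}

theorem isRiccatiGain_iff {K : Matrix κ ι α} :
    IsRiccatiGain A B R P K ↔ (R + Bᵀ * P * B) * K = Bᵀ * P * A := by
  rw [IsRiccatiGain, Matrix.mul_sub, Matrix.add_mul, sub_eq_iff_eq_add, Matrix.mul_assoc (Bᵀ * P),
    eq_comm, add_comm]

theorem isRiccatiGain_riccatiGain [DecidableEq κ] (hS : IsUnit (R + Bᵀ * P * B).det) :
    IsRiccatiGain A B R P (riccatiGain A B R P) :=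
  isRiccatiGain_iff.2 (mul_nonsing_inv_cancel_left _ _ hS)

namespace IsRiccatiGain

variable {K : Matrix κ ι α}

theorem transpose_mul_mul (hK : IsRiccatiGain A B R P K) (hP : P.IsSymm) (hR : R.IsSymm)
    {ν : Type*} [Fintype ν] (X : Matrix κ ν α) :
    (A - B * K)ᵀ * (P * (B * X)) = Kᵀ * (R * X) := by
  simpa only [transpose_mul, transpose_transpose, hP.eq, hR.eq, Matrix.mul_assoc] using congrArg (fun M => Mᵀ * X) hK

theorem lyapunovUpdate_add (hK : IsRiccatiGain A B R P K) (hP : P.IsSymm) (hR : R.IsSymm)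
    (δ : Matrix κ ι α) :
    lyapunovUpdate A B Q R P (K + δ) = lyapunovUpdate A B Q R P K + δᵀ * (R + Bᵀ * P * B) * δ := by
  have h₁ : δᵀ * (Bᵀ * (P * (A - B * K))) = δᵀ * (R * K) := by
    simpa only [Matrix.mul_assoc] using congrArg (δᵀ * ·) hK
  have h₂ := hK.transpose_mul_mul hP hR δ
  have hδ : A - B * (K + δ) = (A - B * K) - B * δ := by rw [Matrix.mul_add]; abel
  simp only [lyapunovUpdate, hδ]
  generalize A - B * K = C at h₁ h₂ ⊢
  simp only [transpose_sub, transpose_add, transpose_mul, Matrix.sub_mul, Matrix.mul_sub,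
    Matrix.add_mul, Matrix.mul_add, Matrix.mul_assoc, h₁, h₂]
  abel

theorem lyapunovUpdate_sub_lyapunovUpdate {P' : Matrix ι ι α} {K' : Matrix κ ι α} (hK : IsRiccatiGain A B R P K)
    (hK' : IsRiccatiGain A B R P' K') (hP : P.IsSymm) (hR : R.IsSymm) :
    lyapunovUpdate A B Q R P K - lyapunovUpdate A B Q R P' K'
      = (A - B * K)ᵀ * (P - P') * (A - B * K') := by
  have e : (A - B * K)ᵀ * P * (A - B * K')
      = (A - B * K)ᵀ * P * (A - B * K) + Kᵀ * R * (K - K') := by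
    have hC : A - B * K' = (A - B * K) + B * (K - K') := by rw [Matrix.mul_sub]; abel
    rw [hC, Matrix.mul_add]
    simp only [Matrix.mul_assoc, hK.transpose_mul_mul hP hR]
  have e' : (A - B * K)ᵀ * P' * (A - B * K')
      = (A - B * K')ᵀ * P' * (A - B * K') + (K' - K)ᵀ * R * K' := by
    have hC : A - B * K = (A - B * K') + B * (K' - K) := by rw [Matrix.mul_sub]; abel
    have := congrArg ((K' - K)ᵀ * ·) hK'
    simp only [Matrix.mul_assoc] at this ⊢
    rw [hC, transpose_add, Matrix.add_mul, transpose_mul, Matrix.mul_assoc, this]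
  rw [lyapunovUpdate, lyapunovUpdate, Matrix.mul_sub _ P, Matrix.sub_mul, e, e']
  simp only [transpose_sub, Matrix.sub_mul, Matrix.mul_sub]
  abel

theorem one_add_mul_closedLoop [DecidableEq ι] [DecidableEq κ] (hK : IsRiccatiGain A B R P K)
    (hR : IsUnit R.det) : (1 + B * R⁻¹ * Bᵀ * P) * (A - B * K) = A := by
  have hBK : B * R⁻¹ * Bᵀ * P * (A - B * K) = B * K := by
    have := congrArg (B * R⁻¹ * ·) hK
    simp only [Matrix.mul_assoc, nonsing_inv_mul_cancel_left _ _ hR] at this ⊢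
    exact this
  rw [Matrix.add_mul, Matrix.one_mul, hBK, sub_add_cancel]

end IsRiccatiGain

theorem isUnit_det_one_add_mul [DecidableEq ι] [DecidableEq κ] (hR : IsUnit R.det)
    (hS : IsUnit (R + Bᵀ * P * B).det) : IsUnit (1 + B * R⁻¹ * Bᵀ * P).det := by
  have h : R⁻¹ * (R + Bᵀ * P * B) = 1 + R⁻¹ * Bᵀ * P * B := by
    rw [Matrix.mul_add, nonsing_inv_mul _ hR]
    simp only [Matrix.mul_assoc]
  rw [show B * R⁻¹ * Bᵀ * P = B * (R⁻¹ * Bᵀ * P) by simp only [Matrix.mul_assoc],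
    det_one_add_mul_comm, ← h, det_mul]
  exact (isUnit_nonsing_inv_det R hR).mul hS

theorem IsRiccatiGain.closedLoop_eq [DecidableEq ι] [DecidableEq κ] {K : Matrix κ ι α}
    (hK : IsRiccatiGain A B R P K) (hP : P.IsSymm) (hRs : R.IsSymm) (hR : IsUnit R.det)
    (hS : IsUnit (R + Bᵀ * P * B).det) :
    A - B * K = (1 + P * B * R⁻¹ * Bᵀ)⁻¹ᵀ * A := by
  have hT : (1 + P * B * R⁻¹ * Bᵀ)ᵀ = 1 + B * R⁻¹ * Bᵀ * P := by
    simp only [transpose_add, transpose_one, transpose_mul, transpose_transpose,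
      transpose_nonsing_inv, hP.eq, hRs.eq, Matrix.mul_assoc]
  rw [transpose_nonsing_inv, hT]
  calc A - B * K = (1 + B * R⁻¹ * Bᵀ * P)⁻¹ * ((1 + B * R⁻¹ * Bᵀ * P) * (A - B * K)) :=
        (nonsing_inv_mul_cancel_left _ _ (isUnit_det_one_add_mul hR hS)).symm
    _ = (1 + B * R⁻¹ * Bᵀ * P)⁻¹ * A := by rw [hK.one_add_mul_closedLoop hR]

theorem riccatiUpdate_eq_lyapunovUpdate [DecidableEq κ] (hP : P.IsSymm) (hR : R.IsSymm)
    (hS : IsUnit (R + Bᵀ * P * B).det) :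
    riccatiUpdate A B Q R P = lyapunovUpdate A B Q R P (riccatiGain A B R P) := by
  set K := riccatiGain A B R P with hK_def
  have hKT : Kᵀ = Aᵀ * P * B * (R + Bᵀ * P * B)⁻¹ := by
    simp only [hK_def, riccatiGain, transpose_mul, transpose_nonsing_inv, transpose_add,
      transpose_transpose, hP.eq, hR.eq, Matrix.mul_assoc]
  have h := (isRiccatiGain_riccatiGain (A := A) hS).transpose_mul_mul hP hR K
  rw [riccatiUpdate, ← hKT, lyapunovUpdate, Matrix.mul_sub _ A, Matrix.mul_assoc _ P (B * K), h]
  simp only [transpose_sub, transpose_mul, Matrix.sub_mul, Matrix.mul_assoc]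
  abel

theorem Matrix.PosDef.isUnit_det_add_transpose_mul_mul {ι κ : Type*} [Fintype ι] [Fintype κ]
    [DecidableEq κ] {R : Matrix κ κ ℝ} (hR : R.PosDef) {P : Matrix ι ι ℝ} (hP : P.PosSemidef)
    (B : Matrix ι κ ℝ) : IsUnit (R + Bᵀ * P * B).det :=
  (hR.add_posSemidef (hP.conjTranspose_mul_mul_same B)).det_pos.ne'.isUnit

open scoped Matrix.Norms.L2Operator

section L2OpNorm

variable {ι κ μ ν : Type*} [Fintype ι] [Fintype κ] [Fintype μ] [Fintype ν]
  [DecidableEq ι] [DecidableEq κ] [DecidableEq μ] [DecidableEq ν]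

theorem Matrix.l2_opNorm_transpose (M : Matrix ι κ ℝ) : ‖Mᵀ‖ = ‖M‖ := by
  simpa only [conjTranspose_eq_transpose_of_trivial] using l2_opNorm_conjTranspose M

theorem Matrix.l2_opNorm_transpose_mul_mul_le (X : Matrix κ ι ℝ)
    (Y : Matrix κ μ ℝ) (Z : Matrix μ ν ℝ) : ‖Xᵀ * Y * Z‖ ≤ ‖X‖ * ‖Y‖ * ‖Z‖ :=
  calc ‖Xᵀ * Y * Z‖ ≤ ‖Xᵀ * Y‖ * ‖Z‖ := l2_opNorm_mul _ _
    _ ≤ ‖Xᵀ‖ * ‖Y‖ * ‖Z‖ := by gcongr; exact l2_opNorm_mul _ _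
    _ = ‖X‖ * ‖Y‖ * ‖Z‖ := by rw [l2_opNorm_transpose]

end L2OpNorm

theorem specNorm_eq_l2_opNorm {p q : ℕ} (M : Matrix (Fin p) (Fin q) ℝ) : specNorm M = ‖M‖ := rfl

theorem riccati_lyapunov_update_perturbation_bound_general {n m : ℕ}
    (A : Matrix (Fin n) (Fin n) ℝ) (B : Matrix (Fin n) (Fin m) ℝ)
    (Q : Matrix (Fin n) (Fin n) ℝ) (R : Matrix (Fin m) (Fin m) ℝ)
    (P Pt : Matrix (Fin n) (Fin n) ℝ) (δ : Matrix (Fin m) (Fin n) ℝ)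
    (hR : R.PosDef) (hP : P.PosSemidef) (hPt : Pt.PosSemidef) :
    letI Pplus := Q + Aᵀ * P * A - Aᵀ * P * B * (R + Bᵀ * P * B)⁻¹ * (Bᵀ * P * A)
    letI K := (R + Bᵀ * P * B)⁻¹ * (Bᵀ * P * A)
    letI Kt0 := (R + Bᵀ * Pt * B)⁻¹ * (Bᵀ * Pt * A)
    letI Ptplus := (A - B * (Kt0 + δ))ᵀ * Pt * (A - B * (Kt0 + δ))
      + (Kt0 + δ)ᵀ * R * (Kt0 + δ) + Q
    specNorm (Pplus - Ptplus)
      ≤ specNorm A * specNorm (A - B * K)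
          * specNorm ((1 : Matrix (Fin n) (Fin n) ℝ) + Pt * B * R⁻¹ * Bᵀ)⁻¹
          * specNorm (P - Pt)
        + specNorm δ ^ 2 * specNorm (R + Bᵀ * Pt * B) := by
  change specNorm (riccatiUpdate A B Q R P - lyapunovUpdate A B Q R Pt (riccatiGain A B R Pt + δ))
    ≤ specNorm A * specNorm (A - B * riccatiGain A B R P) * specNorm (1 + Pt * B * R⁻¹ * Bᵀ)⁻¹
        * specNorm (P - Pt) + specNorm δ ^ 2 * specNorm (R + Bᵀ * Pt * B)
  set K := riccatiGain A B R P
  set Kt := riccatiGain A B R Pt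
  set N := (1 + Pt * B * R⁻¹ * Bᵀ)⁻¹
  set St := R + Bᵀ * Pt * B
  have hRs : R.IsSymm := isHermitian_iff_isSymm.1 hR.1
  have hPs : P.IsSymm := isHermitian_iff_isSymm.1 hP.1
  have hPts : Pt.IsSymm := isHermitian_iff_isSymm.1 hPt.1
  have hS := hR.isUnit_det_add_transpose_mul_mul hP B
  have hSt := hR.isUnit_det_add_transpose_mul_mul hPt B
  have hK : IsRiccatiGain A B R P K := isRiccatiGain_riccatiGain hS
  have hKt : IsRiccatiGain A B R Pt Kt := isRiccatiGain_riccatiGain hSt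
  rw [riccatiUpdate_eq_lyapunovUpdate hPs hRs hS, hKt.lyapunovUpdate_add hPts hRs,
    sub_add_eq_sub_sub, hK.lyapunovUpdate_sub_lyapunovUpdate hKt hPs hRs,
    hKt.closedLoop_eq hPts hRs hR.det_pos.ne'.isUnit hSt]
  simp only [specNorm_eq_l2_opNorm]
  calc _ ≤ ‖(A - B * K)ᵀ * (P - Pt) * (Nᵀ * A)‖ + ‖δᵀ * St * δ‖ := norm_sub_le _ _
    _ ≤ ‖A - B * K‖ * ‖P - Pt‖ * (‖N‖ * ‖A‖) + ‖δ‖ * ‖St‖ * ‖δ‖ := by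
      gcongr
      · refine (l2_opNorm_transpose_mul_mul_le _ _ _).trans ?_
        gcongr
        exact (l2_opNorm_mul _ _).trans_eq (by rw [l2_opNorm_transpose])
      · exact l2_opNorm_transpose_mul_mul_le _ _ _
    _ = _ := by ring

/-- Perturbation bound: the distance between the Riccati update
of `P` and the Lyapunov update of `P̃` at the `δ`-perturbed Riccati gain of `P̃`
is bounded by a contraction term in `‖P - P̃‖` plus a quadratic term in `‖δ‖`. -/
theorem riccati_lyapunov_update_perturbation_bound {n m : ℕ}
    (A : Matrix (Fin n) (Fin n) ℝ) (B : Matrix (Fin n) (Fin m) ℝ)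
    (Q : Matrix (Fin n) (Fin n) ℝ) (R : Matrix (Fin m) (Fin m) ℝ)
    (P Pt : Matrix (Fin n) (Fin n) ℝ) (δ : Matrix (Fin m) (Fin n) ℝ)
    (hQ : Q.IsSymm) (hR : R.PosDef) (hP : P.PosSemidef) (hPt : Pt.PosSemidef) :
    letI Pplus := Q + Aᵀ * P * A - Aᵀ * P * B * (R + Bᵀ * P * B)⁻¹ * (Bᵀ * P * A)
    letI K := (R + Bᵀ * P * B)⁻¹ * (Bᵀ * P * A)
    letI Kt0 := (R + Bᵀ * Pt * B)⁻¹ * (Bᵀ * Pt * A)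
    letI Ptplus := (A - B * (Kt0 + δ))ᵀ * Pt * (A - B * (Kt0 + δ))
      + (Kt0 + δ)ᵀ * R * (Kt0 + δ) + Q
    specNorm (Pplus - Ptplus)
      ≤ specNorm A * specNorm (A - B * K)
          * specNorm ((1 : Matrix (Fin n) (Fin n) ℝ) + Pt * B * R⁻¹ * Bᵀ)⁻¹
          * specNorm (P - Pt)
        + specNorm δ ^ 2 * specNorm (R + Bᵀ * Pt * B) :=
  riccati_lyapunov_update_perturbation_bound_general A B Q R P Pt δ hR hP hPt
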